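/- arXiv:1107.5146 — 4 statements merged into one kernel-verified Lean document; each statement's English description precedes it below -/
import Mathlib

section
/- If ς > 0 is a critical point of the canonical dual function P^d(ς) = −1/(8ς) − (1/2)ς² − 2ς, and x = 1/(2ς), then x is a critical point of P(x) = (1/2)((1/2)x² − 2)² − (1/2)x and P(x) = P^d(ς). -/
/-!
With `ς = ½ x² - μ` as dual variable, the double-well energy `½ (½ x² - μ)² - f x` has the
canonical dual `-f² / (2ς) - ½ ς² - μ ς`. The dual is stationary exactly when
`f² / (2ς²) = ς + μ`, i.e. when `x = f / ς` satisfies `½ x² - μ = ς`. Substituting this relation,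
the primal derivative `x (½ x² - μ) - f` becomes `(f / ς) ς - f = 0`, and both the primal and the
dual value reduce to `½ ς² - f² / ς`.
-/

namespace DoubleWell

variable (μ f : ℝ)

noncomputable def primal (x : ℝ) : ℝ := (1 / 2) * ((1 / 2) * x ^ 2 - μ) ^ 2 - f * x

noncomputable def dual (ς : ℝ) : ℝ := -f ^ 2 / (2 * ς) - (1 / 2) * ς ^ 2 - μ * ς

theorem hasDerivAt_primal (x : ℝ) :
    HasDerivAt (primal μ f) (x * ((1 / 2) * x ^ 2 - μ) - f) x := by
  have hinner : HasDerivAt (fun y : ℝ => (1 / 2) * y ^ 2 - μ) x x := by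
    simpa using ((hasDerivAt_pow 2 x).const_mul (1 / 2 : ℝ)).sub_const μ
  exact (((hinner.pow 2).const_mul (1 / 2 : ℝ)).sub ((hasDerivAt_id' x).const_mul f)).congr_deriv
    (by ring)

variable {μ f}

theorem hasDerivAt_dual {ς : ℝ} (hς : ς ≠ 0) :
    HasDerivAt (dual μ f) (f ^ 2 / (2 * ς ^ 2) - ς - μ) ς := by
  have hfrac : HasDerivAt (fun s : ℝ => -f ^ 2 / (2 * s)) (f ^ 2 / (2 * ς ^ 2)) ς := by
    refine ((hasDerivAt_const ς (-f ^ 2)).div ((hasDerivAt_id' ς).const_mul 2)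
      (mul_ne_zero two_ne_zero hς)).congr_deriv ?_
    field_simp
    ring
  have hsq : HasDerivAt (fun s : ℝ => (1 / 2) * s ^ 2) ς ς :=
    ((hasDerivAt_pow 2 ς).const_mul (1 / 2 : ℝ)).congr_deriv (by ring)
  exact ((hfrac.sub hsq).sub ((hasDerivAt_id' ς).const_mul μ)).congr_deriv (by ring)

theorem half_sq_sub_eq_of_deriv_dual_eq_zero {ς : ℝ} (hς : ς ≠ 0)
    (hcrit : deriv (dual μ f) ς = 0) : (1 / 2) * (f / ς) ^ 2 - μ = ς := by
  rw [(hasDerivAt_dual hς).deriv] at hcrit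
  field_simp at hcrit ⊢
  linear_combination hcrit

theorem deriv_primal_eq_zero_of_deriv_dual_eq_zero {ς : ℝ} (hς : ς ≠ 0)
    (hcrit : deriv (dual μ f) ς = 0) : deriv (primal μ f) (f / ς) = 0 := by
  rw [(hasDerivAt_primal μ f _).deriv, half_sq_sub_eq_of_deriv_dual_eq_zero hς hcrit]
  field_simp
  ring

theorem primal_eq_dual_of_deriv_dual_eq_zero {ς : ℝ} (hς : ς ≠ 0)
    (hcrit : deriv (dual μ f) ς = 0) : primal μ f (f / ς) = dual μ f ς := by
  have hrel := half_sq_sub_eq_of_deriv_dual_eq_zero hς hcrit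
  have hμ : μ = (1 / 2) * (f / ς) ^ 2 - ς := by linarith
  rw [primal, dual, hrel, hμ]
  field_simp
  ring

end DoubleWell

open DoubleWell in
theorem canonical_dual_critical_point (ς x : ℝ) (hς : 0 < ς)
    (hcrit : deriv (fun s : ℝ => -1 / (8 * s) - (1 / 2) * s ^ 2 - 2 * s) ς = 0)
    (hx : x = 1 / (2 * ς)) :
    deriv (fun x' : ℝ => (1 / 2) * ((1 / 2) * x' ^ 2 - 2) ^ 2 - (1 / 2) * x') x = 0 ∧
    (1 / 2) * ((1 / 2) * x ^ 2 - 2) ^ 2 - (1 / 2) * x =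
      -1 / (8 * ς) - (1 / 2) * ς ^ 2 - 2 * ς := by
  have hP : (fun x' : ℝ => (1 / 2) * ((1 / 2) * x' ^ 2 - 2) ^ 2 - (1 / 2) * x') =
      primal 2 (1 / 2) := rfl
  have hD : (fun s : ℝ => -1 / (8 * s) - (1 / 2) * s ^ 2 - 2 * s) = dual 2 (1 / 2) := by
    funext s
    rw [dual]
    ring
  have hx' : x = (1 / 2) / ς := by rw [hx]; ring
  rw [hD] at hcrit
  rw [hP, hx']
  exact ⟨deriv_primal_eq_zero_of_deriv_dual_eq_zero hς.ne' hcrit,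
    (primal_eq_dual_of_deriv_dual_eq_zero hς.ne' hcrit).trans (congrFun hD ς).symm⟩
end

section
/- For the Gao-Strang complementary function Ξ(x, ς) = ((1/2)x² − 2)ς − (1/2)ς² − (1/2)x, a pair (x̄, ς̄) with ς̄ ≠ 0 is a critical point of Ξ if and only if ς̄ = (1/2)x̄² − 2 and x̄·ς̄ = 1/2; at any such point, P(x̄) = Ξ(x̄, ς̄) = P^d(ς̄), where P(x) = (1/2)((1/2)x² − 2)² − (1/2)x and P^d(ς) = −1/(8ς) − (1/2)ς² − 2ς. -/
/-!
Write `ξ = x²/2 - λ` for the strain. Completing the square in `ς` gives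
`Ξ(x, ς) = P(x) - (ς - ξ)²/2`, and completing the square in `x` gives
`Ξ(x, ς) = Pᵈ(ς) + (ς/2)(x - f/ς)²`. The two partial derivatives of `Ξ` vanish exactly
when `ς = ξ` and `x ς = f`, i.e. exactly when both squares vanish, so `P`, `Ξ` and `Pᵈ`
agree at a critical point. The theorem is the case `λ = 2`, `f = 1/2`.
-/

noncomputable section

namespace GaoStrang

variable (lam f : ℝ)

def complementary (x ς : ℝ) : ℝ := ((1 / 2) * x ^ 2 - lam) * ς - (1 / 2) * ς ^ 2 - f * x

def primal (x : ℝ) : ℝ := (1 / 2) * ((1 / 2) * x ^ 2 - lam) ^ 2 - f * x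

def dual (ς : ℝ) : ℝ := -f ^ 2 / (2 * ς) - (1 / 2) * ς ^ 2 - lam * ς

theorem hasDerivAt_complementary_left (x ς : ℝ) :
    HasDerivAt (fun y => complementary lam f y ς) (x * ς - f) x := by
  have := ((((hasDerivAt_pow 2 x).const_mul (1 / 2 : ℝ)).sub_const lam).mul_const ς).sub_const
    ((1 / 2) * ς ^ 2) |>.sub ((hasDerivAt_id x).const_mul f)
  exact this.congr_deriv (by simp)

theorem hasDerivAt_complementary_right (x ς : ℝ) :
    HasDerivAt (complementary lam f x) ((1 / 2) * x ^ 2 - lam - ς) ς := by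
  have := (((hasDerivAt_id ς).const_mul ((1 / 2) * x ^ 2 - lam)).sub
    ((hasDerivAt_pow 2 ς).const_mul (1 / 2 : ℝ))).sub_const (f * x)
  exact this.congr_deriv (by simp)

theorem deriv_complementary_eq_zero_iff (x ς : ℝ) :
    (deriv (fun y => complementary lam f y ς) x = 0 ∧ deriv (complementary lam f x) ς = 0) ↔
      (ς = (1 / 2) * x ^ 2 - lam ∧ x * ς = f) := by
  rw [(hasDerivAt_complementary_left lam f x ς).deriv,
    (hasDerivAt_complementary_right lam f x ς).deriv, sub_eq_zero, sub_eq_zero,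
    eq_comm (a := _ - lam)]
  exact and_comm

theorem complementary_eq_primal_sub_sq (x ς : ℝ) :
    complementary lam f x ς = primal lam f x - (1 / 2) * (ς - ((1 / 2) * x ^ 2 - lam)) ^ 2 := by
  unfold complementary primal
  ring

theorem complementary_eq_dual_add_sq {ς : ℝ} (hς : ς ≠ 0) (x : ℝ) :
    complementary lam f x ς = dual lam f ς + (ς / 2) * (x - f / ς) ^ 2 := by
  unfold complementary dual
  field_simp
  ring

theorem complementary_eq_primal {x ς : ℝ} (h : ς = (1 / 2) * x ^ 2 - lam) :
    complementary lam f x ς = primal lam f x := by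
  simp [complementary_eq_primal_sub_sq, h]

theorem complementary_eq_dual {x ς : ℝ} (hς : ς ≠ 0) (h : x * ς = f) :
    complementary lam f x ς = dual lam f ς := by
  rw [complementary_eq_dual_add_sq lam f hς, ← h, mul_div_cancel_right₀ x hς]
  simp

end GaoStrang

end

open GaoStrang in
theorem gao_strang_critical_point_general (x ς : ℝ) :
    ((deriv (fun x' : ℝ => ((1 / 2) * x' ^ 2 - 2) * ς - (1 / 2) * ς ^ 2 - (1 / 2) * x') x = 0 ∧
      deriv (fun s : ℝ => ((1 / 2) * x ^ 2 - 2) * s - (1 / 2) * s ^ 2 - (1 / 2) * x) ς = 0) ↔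
      (ς = (1 / 2) * x ^ 2 - 2 ∧ x * ς = 1 / 2)) ∧
    ((ς = (1 / 2) * x ^ 2 - 2 ∧ x * ς = 1 / 2) →
      (1 / 2) * ((1 / 2) * x ^ 2 - 2) ^ 2 - (1 / 2) * x =
        ((1 / 2) * x ^ 2 - 2) * ς - (1 / 2) * ς ^ 2 - (1 / 2) * x ∧
      ((1 / 2) * x ^ 2 - 2) * ς - (1 / 2) * ς ^ 2 - (1 / 2) * x =
        -1 / (8 * ς) - (1 / 2) * ς ^ 2 - 2 * ς) := by
  refine ⟨deriv_complementary_eq_zero_iff 2 (1 / 2) x ς, fun ⟨hstrain, hstress⟩ => ⟨?_, ?_⟩⟩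
  · exact (complementary_eq_primal 2 (1 / 2) hstrain).symm
  · have hς : ς ≠ 0 := right_ne_zero_of_mul (a := x) (by rw [hstress]; norm_num)
    refine (complementary_eq_dual 2 (1 / 2) hς hstress).trans ?_
    unfold dual
    ring

theorem gao_strang_critical_point (x ς : ℝ) (hς : ς ≠ 0) :
    ((deriv (fun x' : ℝ => ((1 / 2) * x' ^ 2 - 2) * ς - (1 / 2) * ς ^ 2 - (1 / 2) * x') x = 0 ∧
      deriv (fun s : ℝ => ((1 / 2) * x ^ 2 - 2) * s - (1 / 2) * s ^ 2 - (1 / 2) * x) ς = 0) ↔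
      (ς = (1 / 2) * x ^ 2 - 2 ∧ x * ς = 1 / 2)) ∧
    ((ς = (1 / 2) * x ^ 2 - 2 ∧ x * ς = 1 / 2) →
      (1 / 2) * ((1 / 2) * x ^ 2 - 2) ^ 2 - (1 / 2) * x =
        ((1 / 2) * x ^ 2 - 2) * ς - (1 / 2) * ς ^ 2 - (1 / 2) * x ∧
      ((1 / 2) * x ^ 2 - 2) * ς - (1 / 2) * ς ^ 2 - (1 / 2) * x =
        -1 / (8 * ς) - (1 / 2) * ς ^ 2 - 2 * ς) :=
  gao_strang_critical_point_general x ς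
end

section
/- Global optimality criterion (canonical duality, general quartic case in ℝⁿ): let P(x) = Σ_{i=1}^m (α_i/2)((1/2)xᵀA_i x + b_iᵀx + c_i)² + (1/2)xᵀQx − xᵀf with symmetric A_i, Q, and α_i > 0. Suppose ς̄ ∈ ℝᵐ satisfies: (i) G(ς̄) = Q + Σ ς̄_i A_i is positive definite, (ii) with x̄ = G(ς̄)⁻¹(f − Σ ς̄_i b_i), one has ς̄_i = α_i((1/2)x̄ᵀA_i x̄ + b_iᵀx̄ + c_i) for all i. Then x̄ is a global minimizer of P on ℝⁿ. -/
/-!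
Canonical duality: with `g_i = quadraticMeasure A b c i`, replacing each square by its
Fenchel–Young lower bound `(α_i/2) g_i² ≥ ς_i g_i − ς_i²/(2α_i)` turns `P` into the total
complementary function `Ξ(x, ς) = ½ xᵀG(ς)x − xᵀF(ς) + Σ ς_i c_i − Σ ς_i²/(2α_i)`, so
`Ξ(x, ς) ≤ P(x)` for every `ς`, with equality when `ς_i = α_i g_i(x)`. For `ς = ς̄`, `Ξ(·, ς̄)` is
a convex quadratic whose stationarity condition `G(ς̄) x = F(ς̄)` holds at `x̄`, and the
stationarity condition in `ς` makes `Ξ(x̄, ς̄) = P(x̄)`. Hence `P(x̄) = Ξ(x̄, ς̄) ≤ Ξ(x, ς̄) ≤ P(x)`.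
-/

open Matrix

noncomputable section CanonicalDuality

variable {ι κ : Type*} [Fintype ι] [Fintype κ]

theorem mul_sub_sq_div_le_half_mul_sq {a : ℝ} (ha : 0 < a) (s g : ℝ) :
    s * g - s ^ 2 / (2 * a) ≤ a / 2 * g ^ 2 := by
  have hsq : 0 ≤ (a * g - s) ^ 2 / (2 * a) := by positivity
  have hexpand : a / 2 * g ^ 2 - (s * g - s ^ 2 / (2 * a)) = (a * g - s) ^ 2 / (2 * a) := by
    field_simp
    ring
  linarith

theorem mul_mul_sub_sq_div_eq_half_mul_sq {a : ℝ} (ha : a ≠ 0) (g : ℝ) :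
    a * g * g - (a * g) ^ 2 / (2 * a) = a / 2 * g ^ 2 := by
  field_simp
  ring

theorem Matrix.PosSemidef.half_quadForm_sub_le {G : Matrix ι ι ℝ} (hG : G.PosSemidef)
    {F z : ι → ℝ} (hz : G *ᵥ z = F) (x : ι → ℝ) :
    1 / 2 * (z ⬝ᵥ G *ᵥ z) - z ⬝ᵥ F ≤ 1 / 2 * (x ⬝ᵥ G *ᵥ x) - x ⬝ᵥ F := by
  have hsymm : x ⬝ᵥ G *ᵥ z = z ⬝ᵥ G *ᵥ x := by
    rw [dotProduct_mulVec, ← mulVec_transpose, ← conjTranspose_eq_transpose_of_trivial,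
      hG.isHermitian.eq, dotProduct_comm]
  have hnonneg := hG.dotProduct_mulVec_nonneg (x - z)
  simp only [star_trivial, mulVec_sub, dotProduct_sub, sub_dotProduct] at hnonneg
  rw [← hz]
  linarith

theorem dotProduct_add_sum_smul_mulVec (Q : Matrix ι ι ℝ) (A : κ → Matrix ι ι ℝ) (ς : κ → ℝ)
    (x : ι → ℝ) :
    x ⬝ᵥ (Q + ∑ i, ς i • A i) *ᵥ x = x ⬝ᵥ Q *ᵥ x + ∑ i, ς i * (x ⬝ᵥ A i *ᵥ x) := by
  simp [add_mulVec, sum_mulVec, dotProduct_sum, smul_mulVec]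

theorem dotProduct_sub_sum_smul (f : ι → ℝ) (b : κ → ι → ℝ) (ς : κ → ℝ) (x : ι → ℝ) :
    x ⬝ᵥ (f - ∑ i, ς i • b i) = x ⬝ᵥ f - ∑ i, ς i * (b i ⬝ᵥ x) := by
  simp [dotProduct_sum, dotProduct_comm]

variable (A : κ → Matrix ι ι ℝ) (Q : Matrix ι ι ℝ) (b : κ → ι → ℝ) (f : ι → ℝ) (c α : κ → ℝ)

def quadraticMeasure (i : κ) (x : ι → ℝ) : ℝ :=
  1 / 2 * (x ⬝ᵥ A i *ᵥ x) + b i ⬝ᵥ x + c i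

def quarticObjective (x : ι → ℝ) : ℝ :=
  (∑ i, α i / 2 * quadraticMeasure A b c i x ^ 2) + 1 / 2 * (x ⬝ᵥ Q *ᵥ x) - x ⬝ᵥ f

def totalComplementary (ς : κ → ℝ) (x : ι → ℝ) : ℝ :=
  1 / 2 * (x ⬝ᵥ (Q + ∑ i, ς i • A i) *ᵥ x) - x ⬝ᵥ (f - ∑ i, ς i • b i)
    + ∑ i, ς i * c i - ∑ i, ς i ^ 2 / (2 * α i)

theorem totalComplementary_eq_sum (ς : κ → ℝ) (x : ι → ℝ) :
    totalComplementary A Q b f c α ς x =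
      (∑ i, (ς i * quadraticMeasure A b c i x - ς i ^ 2 / (2 * α i)))
        + 1 / 2 * (x ⬝ᵥ Q *ᵥ x) - x ⬝ᵥ f := by
  simp only [totalComplementary, quadraticMeasure, dotProduct_add_sum_smul_mulVec,
    dotProduct_sub_sum_smul, mul_add, Finset.sum_sub_distrib, Finset.sum_add_distrib,
    Finset.mul_sum]
  ring_nf

theorem totalComplementary_le_quarticObjective (hα : ∀ i, 0 < α i) (ς : κ → ℝ) (x : ι → ℝ) :
    totalComplementary A Q b f c α ς x ≤ quarticObjective A Q b f c α x := by
  rw [totalComplementary_eq_sum, quarticObjective]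
  gcongr with i
  exact mul_sub_sq_div_le_half_mul_sq (hα i) _ _

theorem totalComplementary_eq_quarticObjective (hα : ∀ i, α i ≠ 0) (ς : κ → ℝ) (x : ι → ℝ)
    (hς : ∀ i, ς i = α i * quadraticMeasure A b c i x) :
    totalComplementary A Q b f c α ς x = quarticObjective A Q b f c α x := by
  rw [totalComplementary_eq_sum, quarticObjective]
  congr 2
  refine Finset.sum_congr rfl fun i _ => ?_
  rw [hς i]
  exact mul_mul_sub_sq_div_eq_half_mul_sq (hα i) _

theorem totalComplementary_le_of_mulVec_eq {ς : κ → ℝ}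
    (hG : (Q + ∑ i, ς i • A i).PosSemidef) {z : ι → ℝ}
    (hz : (Q + ∑ i, ς i • A i) *ᵥ z = f - ∑ i, ς i • b i) (x : ι → ℝ) :
    totalComplementary A Q b f c α ς z ≤ totalComplementary A Q b f c α ς x := by
  simp only [totalComplementary]
  gcongr ?_ + _ - _
  exact hG.half_quadForm_sub_le hz x

end CanonicalDuality

theorem canonical_duality_global_optimality_general
    (n m : ℕ)
    (A : Fin m → Matrix (Fin n) (Fin n) ℝ) (Q : Matrix (Fin n) (Fin n) ℝ)
    (b : Fin m → Fin n → ℝ) (f : Fin n → ℝ) (c : Fin m → ℝ) (α : Fin m → ℝ)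
    (hα : ∀ i, 0 < α i)
    (ςbar : Fin m → ℝ)
    (hG : (Q + ∑ i, ςbar i • A i).PosDef)
    (xbar : Fin n → ℝ)
    (hxbar : xbar = (Q + ∑ i, ςbar i • A i)⁻¹ *ᵥ (f - ∑ i, ςbar i • b i))
    (hstat : ∀ i, ςbar i = α i * ((1 / 2) * (xbar ⬝ᵥ A i *ᵥ xbar) + b i ⬝ᵥ xbar + c i)) :
    ∀ x : Fin n → ℝ,
      (∑ i, (α i / 2) * ((1 / 2) * (xbar ⬝ᵥ A i *ᵥ xbar) + b i ⬝ᵥ xbar + c i) ^ 2)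
        + (1 / 2) * (xbar ⬝ᵥ Q *ᵥ xbar) - xbar ⬝ᵥ f ≤
      (∑ i, (α i / 2) * ((1 / 2) * (x ⬝ᵥ A i *ᵥ x) + b i ⬝ᵥ x + c i) ^ 2)
        + (1 / 2) * (x ⬝ᵥ Q *ᵥ x) - x ⬝ᵥ f := by
  intro x
  have hGx : (Q + ∑ i, ςbar i • A i) *ᵥ xbar = f - ∑ i, ςbar i • b i := by
    rw [hxbar, mulVec_mulVec, mul_nonsing_inv _ hG.det_pos.ne'.isUnit, one_mulVec]
  change quarticObjective A Q b f c α xbar ≤ quarticObjective A Q b f c α x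
  calc quarticObjective A Q b f c α xbar
      = totalComplementary A Q b f c α ςbar xbar :=
        (totalComplementary_eq_quarticObjective A Q b f c α (fun i => (hα i).ne') ςbar xbar
          hstat).symm
    _ ≤ totalComplementary A Q b f c α ςbar x :=
        totalComplementary_le_of_mulVec_eq A Q b f c α hG.posSemidef hGx x
    _ ≤ quarticObjective A Q b f c α x :=
        totalComplementary_le_quarticObjective A Q b f c α hα ςbar x

theorem canonical_duality_global_optimality
    (n m : ℕ) (hn : 0 < n) (hm : 0 < m)
    (A : Fin m → Matrix (Fin n) (Fin n) ℝ) (Q : Matrix (Fin n) (Fin n) ℝ)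
    (b : Fin m → Fin n → ℝ) (f : Fin n → ℝ) (c : Fin m → ℝ) (α : Fin m → ℝ)
    (hA : ∀ i, (A i).IsSymm) (hQ : Q.IsSymm) (hα : ∀ i, 0 < α i)
    (ςbar : Fin m → ℝ)
    (hG : (Q + ∑ i, ςbar i • A i).PosDef)
    (xbar : Fin n → ℝ)
    (hxbar : xbar = (Q + ∑ i, ςbar i • A i)⁻¹ *ᵥ (f - ∑ i, ςbar i • b i))
    (hstat : ∀ i, ςbar i = α i * ((1 / 2) * (xbar ⬝ᵥ A i *ᵥ xbar) + b i ⬝ᵥ xbar + c i)) :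
    ∀ x : Fin n → ℝ,
      (∑ i, (α i / 2) * ((1 / 2) * (xbar ⬝ᵥ A i *ᵥ xbar) + b i ⬝ᵥ xbar + c i) ^ 2)
        + (1 / 2) * (xbar ⬝ᵥ Q *ᵥ xbar) - xbar ⬝ᵥ f ≤
      (∑ i, (α i / 2) * ((1 / 2) * (x ⬝ᵥ A i *ᵥ x) + b i ⬝ᵥ x + c i) ^ 2)
        + (1 / 2) * (x ⬝ᵥ Q *ᵥ x) - x ⬝ᵥ f :=
  canonical_duality_global_optimality_general n m A Q b f c α hα ςbar hG xbar hxbar hstat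
end

section
/- For the single-anchor perturbed distance problem P_ε(x) = (1/2)(‖x − a‖² − d²)² − εᵀx with a ∈ ℝ³, d > 0, ε ∈ ℝ³ nonzero, if ς̄ > 0 satisfies the stationarity condition ς̄ = ‖x̄ − a‖² − d² with x̄ = a + ε/(2ς̄), then x̄ is a global minimizer of P_ε over ℝ³. -/
theorem perturbed_distance_global_min
    (a ε : EuclideanSpace ℝ (Fin 3)) (d : ℝ) (hd : 0 < d) (hε : ε ≠ 0)
    (ςbar : ℝ) (hς : 0 < ςbar)
    (xbar : EuclideanSpace ℝ (Fin 3)) (hxbar : xbar = a + (2 * ςbar)⁻¹ • ε)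
    (hstat : ςbar = ‖xbar - a‖ ^ 2 - d ^ 2) :
    ∀ x : EuclideanSpace ℝ (Fin 3),
      (1 / 2) * (‖xbar - a‖ ^ 2 - d ^ 2) ^ 2 - inner ℝ ε xbar ≤
      (1 / 2) * (‖x - a‖ ^ 2 - d ^ 2) ^ 2 - inner ℝ ε x := by
  intro x
  have h2 : (2 * ςbar) ≠ 0 := by positivity
  have hb : xbar - a = (2 * ςbar)⁻¹ • ε := by rw [hxbar]; abel
  have hεeq : ε = (2 * ςbar) • (xbar - a) := by
    rw [hb, smul_smul, mul_inv_cancel₀ h2, one_smul]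
  set b := xbar - a with hbdef
  set u := x - a with hudef
  have hxu : xbar - x = b - u := by rw [hbdef, hudef]; abel
  have hi : (inner ℝ ε xbar : ℝ) - inner ℝ ε x = 2 * ςbar * (inner ℝ b b - inner ℝ b u) := by
    rw [← inner_sub_right, hxu, hεeq, real_inner_smul_left, inner_sub_right]
  have hnb : ‖b‖ ^ 2 = inner ℝ b b := real_inner_self_eq_norm_sq b ▸ rfl
  have hnu : ‖u‖ ^ 2 = inner ℝ u u := real_inner_self_eq_norm_sq u ▸ rfl
  have hsq : ‖u - b‖ ^ 2 = inner ℝ u u - 2 * inner ℝ b u + (inner ℝ b b : ℝ) := by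
    rw [← real_inner_self_eq_norm_sq, inner_sub_sub_self, real_inner_comm u b]
    ring
  have hpos : 0 ≤ ςbar * ‖u - b‖ ^ 2 := by positivity
  have hsqpos : 0 ≤ ((‖u‖ ^ 2 - d ^ 2) - ςbar) ^ 2 := sq_nonneg _
  nlinarith [hstat, hi, hsq, hnb, hnu]
end
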